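/- arXiv:0902.1612 — 8 statements merged into one kernel-verified Lean document; each statement's English description precedes it below -/
import Mathlib

section
/- Let S be a topological space each of whose connected components is open in S, and let R′ ⊆ R ⊆ S. If R satisfies the roadmap condition for S, and R′ satisfies the roadmap condition for the subspace R, then R′ satisfies the roadmap condition for S. -/
/-- Let `S` be a topological space each of whose connected components is
open, and let `R' ⊆ R ⊆ S`.  If `R` satisfies the roadmap condition for `S` (every connected
component of `S` has nonempty and connected intersection with `R`), and `R'` satisfies the
roadmap condition for the subspace `R` (every connected component of the subspace `R`,
expressed via `connectedComponentIn R`, has nonempty and connected intersection with `R'`),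
then `R'` satisfies the roadmap condition for `S`. -/
theorem roadmap_of_roadmap_trans
    {S : Type*} [TopologicalSpace S]
    (hopen : ∀ x : S, IsOpen (connectedComponent x))
    (R R' : Set S) (hsub : R' ⊆ R)
    (hR : ∀ x : S, IsConnected (connectedComponent x ∩ R))
    (hR' : ∀ z ∈ R, IsConnected (connectedComponentIn R z ∩ R')) :
    ∀ x : S, IsConnected (connectedComponent x ∩ R') := by
  intro x
  obtain ⟨⟨z, hz⟩, hconn⟩ := hR x
  have hz1 : z ∈ connectedComponent x := hz.1
  have hz2 : z ∈ R := hz.2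
  have h1 : connectedComponentIn R z = connectedComponent x ∩ R := by
    apply Set.Subset.antisymm
    · intro y hy
      refine ⟨?_, connectedComponentIn_subset R z hy⟩
      have := isPreconnected_connectedComponentIn.subset_connectedComponent
        (mem_connectedComponentIn hz2) hy
      rwa [← connectedComponent_eq hz1] at this
    · exact hconn.subset_connectedComponentIn hz Set.inter_subset_right
  have h2 : connectedComponent x ∩ R' = connectedComponentIn R z ∩ R' := by
    rw [h1, Set.inter_assoc, Set.inter_eq_right.mpr hsub]
  rw [h2]
  exact hR' z hz2
end

section
/- Let n ≥ 2 and 1 ≤ p ≤ n − 1, let F : ℝⁿ → ℝᵖ be continuously differentiable, let Z = F⁻¹(0), and let y ∈ Z with first coordinate x₁. Assume that the p × (n−1) matrix of partial derivatives (∂Fᵢ/∂xⱼ(y)) for 1 ≤ i ≤ p and 2 ≤ j ≤ n has rank p. Then there exists an open connected neighborhood U of y in ℝⁿ such that U ∩ Z_{<x₁} is nonempty and connected, and U ∩ Z_{x₁} is contained in the closure of U ∩ Z_{<x₁}. -/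
/-!
The map `G x = (x 0, F x)` has surjective derivative at `y`, because the rank condition says that
`F'(y)` is already onto on the hyperplane `x 0 = 0`. The implicit function theorem turns `G` into
the first component of a local chart `φ` near `y`, in which `Z_{<y 0}` and `Z_{y 0}` become the
flat pieces `(Iio (y 0) × {0}) × ker` and `({y 0} × {0}) × ker`. Pulling back a small ball around
`φ y` gives `U`: there the lower piece is convex, hence connected, and its closure contains the
level piece.
-/

open Set Metric

theorem LinearMap.range_prod_eq_top_of_surjective_domRestrict_ker {R M M₂ M₃ : Type*} [Ring R]
    [AddCommGroup M] [AddCommGroup M₂] [AddCommGroup M₃] [Module R M] [Module R M₂] [Module R M₃]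
    {f : M →ₗ[R] M₂} {g : M →ₗ[R] M₃} (hf : Function.Surjective f)
    (hg : Function.Surjective (g.domRestrict (LinearMap.ker f))) :
    LinearMap.range (f.prod g) = ⊤ := by
  refine LinearMap.range_eq_top.2 fun ⟨t, v⟩ => ?_
  obtain ⟨e, rfl⟩ := hf t
  obtain ⟨⟨w, hw⟩, hgw⟩ := hg (v - g e)
  refine ⟨e + w, Prod.ext ?_ ?_⟩
  · simp [LinearMap.mem_ker.1 hw]
  · have hgw' : g w = v - g e := hgw
    simp [hgw']

theorem surjective_domRestrict_ker_proj_of_rank_eq {𝕜 ι κ : Type*} [Field 𝕜] [Fintype ι]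
    [DecidableEq ι] [Fintype κ] {i₀ : ι} (D : (ι → 𝕜) →ₗ[𝕜] (κ → 𝕜))
    (hrank : (Matrix.of fun i (j : {j : ι // j ≠ i₀}) => D (Pi.single (j : ι) 1) i).rank =
      Fintype.card κ) :
    Function.Surjective (D.domRestrict (LinearMap.ker (LinearMap.proj i₀))) := by
  set M : Matrix κ {j : ι // j ≠ i₀} 𝕜 := Matrix.of fun i j => D (Pi.single (j : ι) 1) i
  have hM : LinearMap.range M.mulVecLin = ⊤ :=
    Submodule.eq_top_of_finrank_eq (hrank.trans (Module.finrank_fintype_fun_eq_card 𝕜).symm)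
  intro v
  obtain ⟨c, rfl⟩ := LinearMap.range_eq_top.1 hM v
  refine ⟨⟨∑ j, c j • Pi.single (j : ι) 1, ?_⟩, ?_⟩
  · simp only [LinearMap.mem_ker, LinearMap.proj_apply, Finset.sum_apply, Pi.smul_apply]
    exact Finset.sum_eq_zero fun j _ => by simp [Pi.single_eq_of_ne' j.2]
  · ext i
    simp [M, Matrix.mulVec, dotProduct, mul_comm]

theorem LinearMap.range_proj_prod_eq_top_of_rank_eq {𝕜 ι κ : Type*} [Field 𝕜] [Fintype ι]
    [DecidableEq ι] [Fintype κ] {i₀ : ι} (D : (ι → 𝕜) →ₗ[𝕜] (κ → 𝕜))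
    (hrank : (Matrix.of fun i (j : {j : ι // j ≠ i₀}) => D (Pi.single (j : ι) 1) i).rank =
      Fintype.card κ) :
    LinearMap.range ((LinearMap.proj i₀).prod D) = ⊤ :=
  range_prod_eq_top_of_surjective_domRestrict_ker (fun t => ⟨Pi.single i₀ t, by simp⟩)
    (surjective_domRestrict_ker_proj_of_rank_eq D hrank)

section Slices

variable {W K : Type*}

theorem isConnected_ball_inter_Iio_prod_singleton_prod_univ [NormedAddCommGroup W]
    [NormedSpace ℝ W] [NormedAddCommGroup K] [NormedSpace ℝ K] (a : ℝ) (w : W) (k : K) {ε : ℝ}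
    (hε : 0 < ε) :
    IsConnected (ball ((a, w), k) ε ∩ (Iio a ×ˢ {w}) ×ˢ univ) := by
  refine Convex.isConnected
    ((convex_ball _ _).inter (((convex_Iio a).prod (convex_singleton w)).prod convex_univ))
    ⟨((a - ε / 2, w), k), ?_, ⟨by simpa using half_pos hε, rfl⟩, trivial⟩
  rw [← ball_prod_same, ← ball_prod_same]
  exact ⟨⟨by simp [abs_of_pos hε, hε], mem_ball_self hε⟩, mem_ball_self hε⟩

theorem ball_inter_singleton_prod_singleton_prod_univ_subset_closure [PseudoMetricSpace W]
    [PseudoMetricSpace K] (a : ℝ) (w : W) (k : K) (ε : ℝ) :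
    ball ((a, w), k) ε ∩ ({a} ×ˢ {w}) ×ˢ univ ⊆
      closure (ball ((a, w), k) ε ∩ (Iio a ×ˢ {w}) ×ˢ univ) := by
  simp only [← ball_prod_same, prod_inter_prod, closure_prod_eq]
  refine prod_mono (prod_mono ?_ subset_closure) subset_closure
  rintro _ ⟨ha, rfl⟩
  have hε : 0 < ε := pos_of_mem_ball ha
  rw [Real.ball_eq_Ioo, Ioo_inter_Iio, min_eq_right (by linarith), closure_Ioo (by linarith)]
  exact ⟨by linarith, le_rfl⟩

end Slices

namespace OpenPartialHomeomorph

variable {X Y : Type*} [TopologicalSpace X] [TopologicalSpace Y] (e : OpenPartialHomeomorph X Y)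

theorem isConnected_source_inter_preimage {s : Set Y} (hs : s ⊆ e.target) (h : IsConnected s) :
    IsConnected (e.source ∩ e ⁻¹' s) := by
  rw [← e.symm_image_eq_source_inter_preimage hs]
  exact h.image _ (e.continuousOn_symm.mono hs)

theorem source_inter_preimage_subset_closure {s t : Set Y} (ht : t ⊆ e.target)
    (hts : t ⊆ closure s) : e.source ∩ e ⁻¹' t ⊆ closure (e.source ∩ e ⁻¹' s) := by
  rintro x ⟨hx, hxt⟩
  have hmem : e x ∈ closure (e.target ∩ s) := e.open_target.inter_closure ⟨ht hxt, hts hxt⟩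
  have := mem_closure_image (e.continuousAt_symm (ht hxt)) hmem
  rw [e.left_inv hx, e.symm_image_target_inter_eq] at this
  exact closure_mono (inter_subset_inter_right _ (preimage_mono inter_subset_right)) this

variable {W K : Type*} [NormedAddCommGroup W] [NormedSpace ℝ W] [NormedAddCommGroup K]
  [NormedSpace ℝ K]

theorem exists_isOpen_isConnected_preimage_Iio_slice (φ : OpenPartialHomeomorph X ((ℝ × W) × K))
    {x : X} {a : ℝ} {w : W} (hx : x ∈ φ.source) (hxa : (φ x).1 = (a, w)) :
    ∃ U : Set X, IsOpen U ∧ IsConnected U ∧ x ∈ U ∧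
      IsConnected (U ∩ φ ⁻¹' ((Iio a ×ˢ {w}) ×ˢ univ)) ∧
      U ∩ φ ⁻¹' (({a} ×ˢ {w}) ×ˢ univ) ⊆ closure (U ∩ φ ⁻¹' ((Iio a ×ˢ {w}) ×ˢ univ)) := by
  obtain ⟨ε, hε, hball⟩ := isOpen_iff.1 φ.open_target _ (φ.map_source hx)
  have hφx : φ x = ((a, w), (φ x).2) := Prod.ext hxa rfl
  rw [hφx] at hball
  refine ⟨φ.source ∩ φ ⁻¹' ball _ ε, φ.isOpen_inter_preimage isOpen_ball,
    φ.isConnected_source_inter_preimage hball (isConnected_ball hε),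
    ⟨hx, by rw [mem_preimage, hφx]; exact mem_ball_self hε⟩, ?_⟩
  simp only [inter_assoc, ← preimage_inter]
  exact ⟨φ.isConnected_source_inter_preimage (inter_subset_left.trans hball)
      (isConnected_ball_inter_Iio_prod_singleton_prod_univ a w _ hε),
    φ.source_inter_preimage_subset_closure (inter_subset_left.trans hball)
      (ball_inter_singleton_prod_singleton_prod_univ_subset_closure a w _ ε)⟩

end OpenPartialHomeomorph

theorem exists_good_nbhd_of_noncritical_general
    {n p : ℕ} [NeZero n]
    (F : (Fin n → ℝ) → (Fin p → ℝ)) (hF : ContDiff ℝ 1 F)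
    (Z : Set (Fin n → ℝ)) (hZ : Z = F ⁻¹' {0})
    (y : Fin n → ℝ) (hy : y ∈ Z)
    (hrank : (Matrix.of fun (i : Fin p) (j : {j : Fin n // j ≠ 0}) =>
        fderiv ℝ F y (Pi.single (j : Fin n) 1) i).rank = p) :
    ∃ U : Set (Fin n → ℝ), IsOpen U ∧ IsConnected U ∧ y ∈ U ∧
      (U ∩ {z ∈ Z | z 0 < y 0}).Nonempty ∧
      IsConnected (U ∩ {z ∈ Z | z 0 < y 0}) ∧
      U ∩ {z ∈ Z | z 0 = y 0} ⊆ closure (U ∩ {z ∈ Z | z 0 < y 0}) := by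
  subst hZ
  have hG : HasStrictFDerivAt (fun x => (x 0, F x))
      ((ContinuousLinearMap.proj 0).prod (fderiv ℝ F y)) y :=
    (ContinuousLinearMap.proj 0).hasStrictFDerivAt.prodMk
      (hF.contDiffAt.hasStrictFDerivAt one_ne_zero)
  have hsurj : ((ContinuousLinearMap.proj 0).prod (fderiv ℝ F y)).range = ⊤ := by
    rw [ContinuousLinearMap.coe_prod, ContinuousLinearMap.coe_proj]
    exact LinearMap.range_proj_prod_eq_top_of_rank_eq _ (hrank.trans (Fintype.card_fin p).symm)
  set φ := hG.implicitToOpenPartialHomeomorph _ _ hsurj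
  have hpre : ∀ s : Set ℝ, {z ∈ F ⁻¹' {0} | z 0 ∈ s} = φ ⁻¹' ((s ×ˢ {0}) ×ˢ univ) := fun s => by
    ext z
    simp only [mem_preimage, mem_prod, mem_singleton_iff, mem_univ, and_true, φ,
      hG.implicitToOpenPartialHomeomorph_fst hsurj]
    exact and_comm
  have hlower : {z ∈ F ⁻¹' {0} | z 0 < y 0} = φ ⁻¹' ((Iio (y 0) ×ˢ {0}) ×ˢ univ) :=
    hpre (Iio (y 0))
  have hlevel : {z ∈ F ⁻¹' {0} | z 0 = y 0} = φ ⁻¹' (({y 0} ×ˢ {0}) ×ˢ univ) := hpre {y 0}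
  obtain ⟨U, hU, hUconn, hyU, hlowerConn, hlevelSub⟩ :=
    φ.exists_isOpen_isConnected_preimage_Iio_slice
      (hG.mem_implicitToOpenPartialHomeomorph_source hsurj)
      (by rw [hG.implicitToOpenPartialHomeomorph_fst hsurj, show F y = 0 from hy])
  refine ⟨U, hU, hUconn, hyU, ?_⟩
  rw [hlower, hlevel]
  exact ⟨hlowerConn.nonempty, hlowerConn, hlevelSub⟩

/-- Let `n ≥ 2`, `1 ≤ p ≤ n - 1`, let `F : ℝⁿ → ℝᵖ` be continuously
differentiable, let `Z = F⁻¹(0)` and let `y ∈ Z` with first coordinate `y 0`.  Assume the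
`p × (n-1)` matrix of partial derivatives `∂Fᵢ/∂xⱼ(y)` for `1 ≤ i ≤ p`, `2 ≤ j ≤ n`
(i.e. over all coordinate indices `j ≠ 0`) has rank `p`.  Then there is an open connected
neighborhood `U` of `y` such that `U ∩ Z_{<y₁}` is nonempty and connected, and
`U ∩ Z_{y₁}` is contained in the closure of `U ∩ Z_{<y₁}`. -/
theorem exists_good_nbhd_of_noncritical
    {n p : ℕ} [NeZero n] (hn : 2 ≤ n) (hp1 : 1 ≤ p) (hpn : p ≤ n - 1)
    (F : (Fin n → ℝ) → (Fin p → ℝ)) (hF : ContDiff ℝ 1 F)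
    (Z : Set (Fin n → ℝ)) (hZ : Z = F ⁻¹' {0})
    (y : Fin n → ℝ) (hy : y ∈ Z)
    (hrank : (Matrix.of fun (i : Fin p) (j : {j : Fin n // j ≠ 0}) =>
        fderiv ℝ F y (Pi.single (j : Fin n) 1) i).rank = p) :
    ∃ U : Set (Fin n → ℝ), IsOpen U ∧ IsConnected U ∧ y ∈ U ∧
      (U ∩ {z ∈ Z | z 0 < y 0}).Nonempty ∧
      IsConnected (U ∩ {z ∈ Z | z 0 < y 0}) ∧
      U ∩ {z ∈ Z | z 0 = y 0} ⊆ closure (U ∩ {z ∈ Z | z 0 < y 0}) :=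
  exists_good_nbhd_of_noncritical_general F hF Z hZ y hy hrank
end

section
/- Let Z ⊆ ℝⁿ and let y ∈ Z with first coordinate y₁. Suppose there exists an open connected set U ⊆ ℝⁿ containing y such that U ∩ Z_{<y₁} is nonempty and connected and U ∩ Z_{y₁} is contained in the closure of U ∩ Z_{<y₁}. Then there is a unique connected component B of Z_{<y₁} that contains U ∩ Z_{<y₁}; moreover y belongs to the closure of B, and B is the unique connected component of Z_{<y₁} whose closure contains y. -/
/-- Let `Z ⊆ ℝⁿ` and `y ∈ Z` with first coordinate `y 0`.  Suppose there
is an open connected set `U ∋ y` with `U ∩ Z_{<y₁}` nonempty and connected and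
`U ∩ Z_{y₁}` contained in the closure of `U ∩ Z_{<y₁}`.  Then there is a unique connected
component `B` of `Z_{<y₁}` (expressed via `connectedComponentIn`) containing
`U ∩ Z_{<y₁}`; moreover `y ∈ closure B`, and `B` is the unique connected component of
`Z_{<y₁}` whose closure contains `y`. -/
theorem exists_unique_component_below
    {n : ℕ} [NeZero n] (Z : Set (Fin n → ℝ)) (y : Fin n → ℝ) (hy : y ∈ Z)
    (U : Set (Fin n → ℝ)) (hUopen : IsOpen U) (hUconn : IsConnected U) (hyU : y ∈ U)
    (hne : (U ∩ {z ∈ Z | z 0 < y 0}).Nonempty)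
    (hconn : IsConnected (U ∩ {z ∈ Z | z 0 < y 0}))
    (hcl : U ∩ {z ∈ Z | z 0 = y 0} ⊆ closure (U ∩ {z ∈ Z | z 0 < y 0})) :
    ∃ B : Set (Fin n → ℝ),
      (∃ z ∈ {z ∈ Z | z 0 < y 0}, B = connectedComponentIn {z ∈ Z | z 0 < y 0} z) ∧
      U ∩ {z ∈ Z | z 0 < y 0} ⊆ B ∧
      y ∈ closure B ∧
      (∀ B' : Set (Fin n → ℝ),
        (∃ z ∈ {z ∈ Z | z 0 < y 0}, B' = connectedComponentIn {z ∈ Z | z 0 < y 0} z) →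
        (U ∩ {z ∈ Z | z 0 < y 0} ⊆ B' → B' = B) ∧ (y ∈ closure B' → B' = B)) := by
  set S : Set (Fin n → ℝ) := {z ∈ Z | z 0 < y 0} with hS
  obtain ⟨z₀, hz₀U, hz₀S⟩ := hne
  have hsub : U ∩ S ⊆ connectedComponentIn S z₀ :=
    hconn.isPreconnected.subset_connectedComponentIn ⟨hz₀U, hz₀S⟩
      (Set.inter_subset_right)
  refine ⟨connectedComponentIn S z₀, ⟨z₀, hz₀S, rfl⟩, hsub, ?_, ?_⟩
  · have hyCl : y ∈ closure (U ∩ S) := hcl ⟨hyU, hy, rfl⟩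
    exact closure_mono hsub hyCl
  · rintro B' ⟨z', hz', rfl⟩
    constructor
    · intro hB'
      have h1 : z₀ ∈ connectedComponentIn S z' := hB' ⟨hz₀U, hz₀S⟩
      exact connectedComponentIn_eq h1
    · intro hyB'
      have : (connectedComponentIn S z' ∩ U).Nonempty := by
        rcases mem_closure_iff.mp hyB' U hUopen hyU with ⟨w, hwU, hwB'⟩
        exact ⟨w, hwB', hwU⟩
      obtain ⟨w, hwB', hwU⟩ := this
      have hwS : w ∈ S := connectedComponentIn_subset S z' hwB'
      have hwB : w ∈ connectedComponentIn S z₀ := hsub ⟨hwU, hwS⟩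
      calc connectedComponentIn S z' = connectedComponentIn S w :=
            connectedComponentIn_eq hwB'
        _ = connectedComponentIn S z₀ := (connectedComponentIn_eq hwB).symm
end

section
/- Let Z ⊆ ℝⁿ, let y ∈ Z with first coordinate y₁, and let U be an open connected set containing y with U ∩ Z_{<y₁} nonempty and connected and U ∩ Z_{y₁} contained in the closure of U ∩ Z_{<y₁}; let B be the connected component of Z_{<y₁} containing U ∩ Z_{<y₁}. Let y′ ∈ U ∩ Z_{y₁}, and let U′ be an open connected set containing y′ with U′ ∩ Z_{<y₁} nonempty and connected and U′ ∩ Z_{y₁} contained in the closure of U′ ∩ Z_{<y₁}; let B′ be the connected component of Z_{<y₁} containing U′ ∩ Z_{<y₁}. Then B′ = B. -/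
/-- Let `Z ⊆ ℝⁿ`, `y ∈ Z` with first coordinate `y 0`, and let `U` be an
open connected set containing `y` with `U ∩ Z_{<y₁}` nonempty and connected and
`U ∩ Z_{y₁} ⊆ closure (U ∩ Z_{<y₁})`; let `B` be the connected component of `Z_{<y₁}`
containing `U ∩ Z_{<y₁}`.  Let `y' ∈ U ∩ Z_{y₁}` and let `U'` be an open connected set
containing `y'` with the same two properties; let `B'` be the connected component of
`Z_{<y₁}` containing `U' ∩ Z_{<y₁}`.  Then `B' = B`. -/
theorem component_below_locally_constant
    {n : ℕ} [NeZero n] (Z : Set (Fin n → ℝ)) (y : Fin n → ℝ) (hy : y ∈ Z)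
    (U : Set (Fin n → ℝ)) (hUopen : IsOpen U) (hUconn : IsConnected U) (hyU : y ∈ U)
    (hne : (U ∩ {z ∈ Z | z 0 < y 0}).Nonempty)
    (hconn : IsConnected (U ∩ {z ∈ Z | z 0 < y 0}))
    (hcl : U ∩ {z ∈ Z | z 0 = y 0} ⊆ closure (U ∩ {z ∈ Z | z 0 < y 0}))
    (B : Set (Fin n → ℝ))
    (hB : ∃ z ∈ {z ∈ Z | z 0 < y 0}, B = connectedComponentIn {z ∈ Z | z 0 < y 0} z)
    (hBU : U ∩ {z ∈ Z | z 0 < y 0} ⊆ B)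
    (y' : Fin n → ℝ) (hy' : y' ∈ U ∩ {z ∈ Z | z 0 = y 0})
    (U' : Set (Fin n → ℝ)) (hU'open : IsOpen U') (hU'conn : IsConnected U')
    (hy'U' : y' ∈ U')
    (hne' : (U' ∩ {z ∈ Z | z 0 < y 0}).Nonempty)
    (hconn' : IsConnected (U' ∩ {z ∈ Z | z 0 < y 0}))
    (hcl' : U' ∩ {z ∈ Z | z 0 = y 0} ⊆ closure (U' ∩ {z ∈ Z | z 0 < y 0}))
    (B' : Set (Fin n → ℝ))
    (hB' : ∃ z ∈ {z ∈ Z | z 0 < y 0}, B' = connectedComponentIn {z ∈ Z | z 0 < y 0} z)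
    (hB'U' : U' ∩ {z ∈ Z | z 0 < y 0} ⊆ B') :
    B' = B := by
  -- y' is in the closure of U ∩ S, and U' is an open neighborhood of y',
  -- so U' meets U ∩ S; a common point lies in both B and B'.
  have hy'cl : y' ∈ closure (U ∩ {z ∈ Z | z 0 < y 0}) := hcl hy'
  obtain ⟨z, hzU', hzUS⟩ :=
    (mem_closure_iff.mp hy'cl) U' hU'open hy'U'
  have hzB : z ∈ B := hBU hzUS
  have hzB' : z ∈ B' := hB'U' ⟨hzU', hzUS.2⟩
  obtain ⟨z₀, hz₀, rfl⟩ := hB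
  obtain ⟨z₁, hz₁, rfl⟩ := hB'
  rw [connectedComponentIn_eq hzB', connectedComponentIn_eq hzB]
end

section
/- Let Z ⊆ ℝⁿ, let x ∈ ℝ, let A be a nonempty connected topological space, and let γ : A → ℝⁿ be a continuous map with γ(A) ⊆ Z_x. Assume that every point y of γ(A) has an open connected neighborhood U in ℝⁿ such that U ∩ Z_{<x} is nonempty and connected and y belongs to the closure of U ∩ Z_{<x}. Then there exists a unique connected component B of Z_{<x} such that γ(A) is contained in the closure of B. -/
/-- Let `Z ⊆ ℝⁿ`, `x ∈ ℝ`, let `A` be a nonempty connected topological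
space and `γ : A → ℝⁿ` continuous with `γ(A) ⊆ Z_x`.  Assume every point `γ a` has an
open connected neighborhood `U` with `U ∩ Z_{<x}` nonempty and connected and
`γ a ∈ closure (U ∩ Z_{<x})`.  Then there is a unique connected component `B` of
`Z_{<x}` (expressed via `connectedComponentIn`) such that `γ(A) ⊆ closure B`. -/
theorem existsUnique_component_closure_of_path_in_fiber
    {n : ℕ} [NeZero n] (Z : Set (Fin n → ℝ)) (x : ℝ)
    {A : Type*} [TopologicalSpace A] [ConnectedSpace A]
    (γ : A → (Fin n → ℝ)) (hγ : Continuous γ)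
    (hrange : ∀ a : A, γ a ∈ {z ∈ Z | z 0 = x})
    (hloc : ∀ a : A, ∃ U : Set (Fin n → ℝ), IsOpen U ∧ IsConnected U ∧ γ a ∈ U ∧
      (U ∩ {z ∈ Z | z 0 < x}).Nonempty ∧ IsConnected (U ∩ {z ∈ Z | z 0 < x}) ∧
      γ a ∈ closure (U ∩ {z ∈ Z | z 0 < x})) :
    ∃! B : Set (Fin n → ℝ),
      (∃ z ∈ {z ∈ Z | z 0 < x}, B = connectedComponentIn {z ∈ Z | z 0 < x} z) ∧
      Set.range γ ⊆ closure B := by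
  classical
  set F : Set (Fin n → ℝ) := {z ∈ Z | z 0 < x} with hFdef
  obtain ⟨a₀⟩ := (inferInstance : Nonempty A)
  obtain ⟨U₀, hU₀open, _, hmem₀, ⟨z₀, hz₀⟩, hconn₀, hcl₀⟩ := hloc a₀
  have hz₀F : z₀ ∈ F := hz₀.2
  set B := connectedComponentIn F z₀ with hBdef
  have hBF : B ⊆ F := connectedComponentIn_subset F z₀
  have hsub₀ : U₀ ∩ F ⊆ B :=
    hconn₀.isPreconnected.subset_connectedComponentIn hz₀ Set.inter_subset_right
  -- helper: a connected subset of F meeting B is contained in B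
  have hkey : ∀ s : Set (Fin n → ℝ), IsPreconnected s → s ⊆ F →
      ∀ b ∈ s, b ∈ B → s ⊆ B := by
    intro s hs hsF b hbs hbB
    have h1 : connectedComponentIn F z₀ = connectedComponentIn F b :=
      connectedComponentIn_eq hbB
    rw [hBdef, h1]
    exact hs.subset_connectedComponentIn hbs hsF
  -- the set of a with γ a ∈ closure B is clopen
  set S : Set A := γ ⁻¹' (closure B) with hSdef
  have hSclosed : IsClosed S := isClosed_closure.preimage hγ
  have hSopen : IsOpen S := by
    rw [isOpen_iff_mem_nhds]
    intro a haS
    obtain ⟨U, hUopen, _, haU, _, hUconn, _⟩ := hloc a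
    -- U meets B
    obtain ⟨b, hbU, hbB⟩ := mem_closure_iff.mp haS U hUopen haU
    have hUF_B : U ∩ F ⊆ B :=
      hkey _ hUconn.isPreconnected Set.inter_subset_right b ⟨hbU, hBF hbB⟩ hbB
    have : γ ⁻¹' U ⊆ S := by
      intro a' ha'U
      obtain ⟨U', hU'open, _, ha'U', _, hU'conn, hcl'⟩ := hloc a'
      obtain ⟨w, hwU, hw'⟩ := mem_closure_iff.mp hcl' U hUopen ha'U
      have hwB : w ∈ B := hUF_B ⟨hwU, hw'.2⟩
      have hU'F_B : U' ∩ F ⊆ B :=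
        hkey _ hU'conn.isPreconnected Set.inter_subset_right w hw' hwB
      exact closure_mono hU'F_B hcl'
    exact Filter.mem_of_superset (hγ.continuousAt.preimage_mem_nhds (hUopen.mem_nhds haU)) this
  have hSuniv : S = Set.univ :=
    (IsClopen.eq_univ ⟨hSclosed, hSopen⟩) ⟨a₀, closure_mono hsub₀ hcl₀⟩
  refine ⟨B, ⟨⟨z₀, hz₀.2, rfl⟩, ?_⟩, ?_⟩
  · rintro _ ⟨a, rfl⟩
    have : a ∈ S := hSuniv ▸ Set.mem_univ a
    exact this
  · rintro B' ⟨⟨z', hz'F, rfl⟩, hB'cl⟩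
    have ha₀ : γ a₀ ∈ closure (connectedComponentIn F z') := hB'cl ⟨a₀, rfl⟩
    obtain ⟨b, hbU₀, hbB'⟩ := mem_closure_iff.mp ha₀ U₀ hU₀open hmem₀
    have hbF : b ∈ F := connectedComponentIn_subset F z' hbB'
    have hbB : b ∈ B := hsub₀ ⟨hbU₀, hbF⟩
    calc connectedComponentIn F z' = connectedComponentIn F b :=
          connectedComponentIn_eq hbB'
      _ = connectedComponentIn F z₀ := (connectedComponentIn_eq hbB).symm
end

section
/- Let Z ⊆ ℝⁿ, let x ∈ ℝ, let A be a nonempty connected topological space, and let γ : A → ℝⁿ be a continuous map with γ(A) ⊆ Z_{≤x}. Assume: (i) every point y of γ(A) ∩ Z_x has an open connected neighborhood U in ℝⁿ such that U ∩ Z_{<x} is nonempty and connected and y belongs to the closure of U ∩ Z_{<x}; (ii) setting G = γ⁻¹(Z_x), the family of subsets of A consisting of the connected components of G together with the closures in A of the connected components of A ∖ G is locally finite in A. Then there exists a unique connected component B of Z_{<x} such that γ(A) is contained in the closure of B. -/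
/-- Let `Z ⊆ ℝⁿ`, `x ∈ ℝ`, let `A` be a nonempty connected topological
space and `γ : A → ℝⁿ` continuous with `γ(A) ⊆ Z_{≤x}`.  Assume:
(i) every point of `γ(A) ∩ Z_x` has an open connected neighborhood `U` with
`U ∩ Z_{<x}` nonempty and connected, and belongs to the closure of `U ∩ Z_{<x}`;
(ii) with `G = γ⁻¹(Z_x)`, the family of subsets of `A` consisting of the connected
components of `G` together with the closures in `A` of the connected components of
`A \ G` is locally finite in `A`.
Then there is a unique connected component `B` of `Z_{<x}` such that
`γ(A) ⊆ closure B`. -/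
theorem existsUnique_component_closure_of_path_below
    {n : ℕ} [NeZero n] (Z : Set (Fin n → ℝ)) (x : ℝ)
    {A : Type*} [TopologicalSpace A] [ConnectedSpace A]
    (γ : A → (Fin n → ℝ)) (hγ : Continuous γ)
    (hrange : ∀ a : A, γ a ∈ {z ∈ Z | z 0 ≤ x})
    (hloc : ∀ a : A, γ a ∈ {z ∈ Z | z 0 = x} →
      ∃ U : Set (Fin n → ℝ), IsOpen U ∧ IsConnected U ∧ γ a ∈ U ∧
        (U ∩ {z ∈ Z | z 0 < x}).Nonempty ∧ IsConnected (U ∩ {z ∈ Z | z 0 < x}) ∧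
        γ a ∈ closure (U ∩ {z ∈ Z | z 0 < x}))
    (G : Set A) (hG : G = γ ⁻¹' {z ∈ Z | z 0 = x})
    (ℱ : Set (Set A))
    (hℱ : ℱ = {C | (∃ a ∈ G, C = connectedComponentIn G a) ∨
                   (∃ a ∈ Gᶜ, C = closure (connectedComponentIn Gᶜ a))})
    (hLF : LocallyFinite (fun C : ℱ => (C : Set A))) :
    ∃! B : Set (Fin n → ℝ),
      (∃ z ∈ {z ∈ Z | z 0 < x}, B = connectedComponentIn {z ∈ Z | z 0 < x} z) ∧
      Set.range γ ⊆ closure B := by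
  classical
  set L : Set (Fin n → ℝ) := {z ∈ Z | z 0 < x} with hLdef
  set Xx : Set (Fin n → ℝ) := {z ∈ Z | z 0 = x} with hXdef
  -- dichotomy for points in the range
  have hdich : ∀ a : A, γ a ∈ L ∨ γ a ∈ Xx := by
    intro a
    obtain ⟨hz, hle⟩ := hrange a
    rcases lt_or_eq_of_le hle with h | h
    · exact Or.inl ⟨hz, h⟩
    · exact Or.inr ⟨hz, h⟩
  have hLX : ∀ z, z ∈ L → z ∉ Xx := fun z hz h => absurd h.2 (ne_of_lt hz.2)
  have hGm : ∀ a : A, a ∈ G ↔ γ a ∈ Xx := by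
    intro a; rw [hG]; exact Iff.rfl
  have hGc : ∀ a : A, a ∈ Gᶜ ↔ γ a ∈ L := by
    intro a
    rw [Set.mem_compl_iff, hGm]
    constructor
    · intro h; rcases hdich a with h' | h'
      · exact h'
      · exact absurd h' h
    · intro h h'; exact hLX _ h h'
  -- choose the neighborhoods `U a` for points with `γ a ∈ Xx`
  have hP : ∀ a : A, γ a ∈ Xx → ∃ U : Set (Fin n → ℝ), IsOpen U ∧ γ a ∈ U ∧
      (U ∩ L).Nonempty ∧ IsPreconnected (U ∩ L) ∧ γ a ∈ closure (U ∩ L) := by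
    intro a ha
    obtain ⟨U, hUo, _, hmem, hne, hconn, hcl⟩ := hloc a ha
    exact ⟨U, hUo, hmem, hne, hconn.isPreconnected, hcl⟩
  let U : A → Set (Fin n → ℝ) := fun a =>
    if h : γ a ∈ Xx then (hP a h).choose else ∅
  have hU : ∀ a, ∀ h : γ a ∈ Xx, IsOpen (U a) ∧ γ a ∈ U a ∧ (U a ∩ L).Nonempty ∧
      IsPreconnected (U a ∩ L) ∧ γ a ∈ closure (U a ∩ L) := by
    intro a h
    simp only [U, dif_pos h]
    exact (hP a h).choose_spec
  -- choose a base point `pt a ∈ L` for every `a`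
  let pt : A → (Fin n → ℝ) := fun a =>
    if h : γ a ∈ Xx then ((hU a h).2.2.1).choose else γ a
  have hptX : ∀ a, ∀ h : γ a ∈ Xx, pt a ∈ U a ∩ L := by
    intro a h
    simp only [pt, dif_pos h]
    exact ((hU a h).2.2.1).choose_spec
  have hptL : ∀ a, γ a ∈ L → pt a = γ a := by
    intro a h
    simp only [pt, dif_neg (hLX _ h)]
  have hptmem : ∀ a, pt a ∈ L := by
    intro a
    rcases hdich a with h | h
    · rw [hptL a h]; exact h
    · exact (hptX a h).2
  -- the component of `L` attached to each point of `A`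
  set b : A → Set (Fin n → ℝ) := fun a => connectedComponentIn L (pt a) with hbdef
  have hUb : ∀ a, ∀ h : γ a ∈ Xx, U a ∩ L ⊆ b a := fun a h =>
    (hU a h).2.2.2.1.subset_connectedComponentIn (hptX a h) Set.inter_subset_right
  have hbL : ∀ a, γ a ∈ L → b a = connectedComponentIn L (γ a) := by
    intro a h; simp only [hbdef, hptL a h]
  have hclos : ∀ a, γ a ∈ closure (b a) := by
    intro a
    rcases hdich a with h | h
    · rw [hbL a h]
      exact subset_closure (mem_connectedComponentIn h)
    · exact closure_mono (hUb a h) (hU a h).2.2.2.2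
  -- local constancy of `b` around points with `γ a ∈ Xx`
  have hF3 : ∀ a, ∀ _ : γ a ∈ Xx, ∀ a', γ a' ∈ U a → b a' = b a := by
    intro a ha a' ha'
    rcases hdich a' with h | h
    · rw [hbL a' h]
      exact (connectedComponentIn_eq (hUb a ha ⟨ha', h⟩)).symm
    · have hne : (U a ∩ (U a' ∩ L)).Nonempty := by
        have hcl := (hU a' h).2.2.2.2
        rw [mem_closure_iff] at hcl
        exact hcl _ (hU a ha).1 ha'
      obtain ⟨w, hw1, hw2⟩ := hne
      have e1 : connectedComponentIn L w = b a :=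
        (connectedComponentIn_eq (hUb a ha ⟨hw1, hw2.2⟩)).symm
      have e2 : connectedComponentIn L w = b a' :=
        (connectedComponentIn_eq (hUb a' h hw2)).symm
      rw [← e2, e1]
  -- `b` is constant on connected components of `G`
  have hconstG : ∀ a₀ ∈ G, ∀ a ∈ connectedComponentIn G a₀, b a = b a₀ := by
    intro a₀ h₀ a ha
    by_contra hne
    set C := connectedComponentIn G a₀ with hCdef
    have hCX : ∀ c ∈ C, γ c ∈ Xx := fun c hc =>
      (hGm c).1 (connectedComponentIn_subset G a₀ hc)
    have hpre : IsPreconnected C := isPreconnected_connectedComponentIn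
    obtain ⟨c, hcmem⟩ := hpre
      (⋃ c ∈ {c ∈ C | b c = b a₀}, γ ⁻¹' (U c))
      (⋃ c ∈ {c ∈ C | b c ≠ b a₀}, γ ⁻¹' (U c))
      (isOpen_biUnion fun c hc => ((hU c (hCX c hc.1)).1).preimage hγ)
      (isOpen_biUnion fun c hc => ((hU c (hCX c hc.1)).1).preimage hγ)
      (by
        intro c hc
        by_cases h : b c = b a₀
        · exact Or.inl (Set.mem_biUnion ⟨hc, h⟩ (hU c (hCX c hc)).2.1)
        · exact Or.inr (Set.mem_biUnion ⟨hc, h⟩ (hU c (hCX c hc)).2.1))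
      ⟨a₀, mem_connectedComponentIn h₀,
        Set.mem_biUnion ⟨mem_connectedComponentIn h₀, rfl⟩
          (hU a₀ (hCX a₀ (mem_connectedComponentIn h₀))).2.1⟩
      ⟨a, ha, Set.mem_biUnion ⟨ha, hne⟩ (hU a (hCX a ha)).2.1⟩
    rw [Set.mem_inter_iff, Set.mem_inter_iff] at hcmem
    obtain ⟨hcC, hc1, hc2⟩ := hcmem
    obtain ⟨c₁, hc₁, hcU₁⟩ := Set.mem_iUnion₂.1 hc1
    obtain ⟨c₂, hc₂, hcU₂⟩ := Set.mem_iUnion₂.1 hc2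
    have e1 : b c = b c₁ := hF3 c₁ (hCX c₁ hc₁.1) c hcU₁
    have e2 : b c = b c₂ := hF3 c₂ (hCX c₂ hc₂.1) c hcU₂
    exact hc₂.2 (by rw [← e2, e1, hc₁.2])
  -- `b` is constant on closures of connected components of `Gᶜ`
  have hconstD : ∀ a₀ ∈ Gᶜ, ∀ a ∈ closure (connectedComponentIn Gᶜ a₀), b a = b a₀ := by
    intro a₀ h₀ a ha
    set D := connectedComponentIn Gᶜ a₀ with hDdef
    have hγa₀ : γ a₀ ∈ L := (hGc a₀).1 h₀
    have hDL : γ '' D ⊆ connectedComponentIn L (γ a₀) := by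
      apply IsPreconnected.subset_connectedComponentIn
      · exact isPreconnected_connectedComponentIn.image _ hγ.continuousOn
      · exact ⟨a₀, mem_connectedComponentIn h₀, rfl⟩
      · rintro _ ⟨c, hc, rfl⟩
        exact (hGc c).1 (connectedComponentIn_subset _ _ hc)
    have hba₀ : b a₀ = connectedComponentIn L (γ a₀) := hbL a₀ hγa₀
    rcases hdich a with h | h
    · have haGc : a ∈ Gᶜ := (hGc a).2 h
      have haD : a ∈ D := by
        have hins : IsPreconnected (insert a D) :=
          isPreconnected_connectedComponentIn.subset_closure (Set.subset_insert a D)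
            (Set.insert_subset_iff.2 ⟨ha, subset_closure⟩)
        have hsub : insert a D ⊆ D :=
          hins.subset_connectedComponentIn
            (Set.mem_insert_iff.2 (Or.inr (mem_connectedComponentIn h₀)))
            (Set.insert_subset_iff.2 ⟨haGc, connectedComponentIn_subset _ _⟩)
        exact hsub (Set.mem_insert a D)
      rw [hbL a h, hba₀]
      exact (connectedComponentIn_eq (hDL ⟨a, haD, rfl⟩)).symm
    · have hne : ((γ ⁻¹' U a) ∩ D).Nonempty := by
        rw [mem_closure_iff] at ha
        exact ha _ (((hU a h).1).preimage hγ) (hU a h).2.1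
      obtain ⟨a', ha'U, ha'D⟩ := hne
      have e1 : b a' = b a := hF3 a h a' ha'U
      have hγa' : γ a' ∈ L := (hGc a').1 (connectedComponentIn_subset _ _ ha'D)
      have e2 : b a' = b a₀ := by
        rw [hbL a' hγa', hba₀]
        exact (connectedComponentIn_eq (hDL ⟨a', ha'D, rfl⟩)).symm
      rw [← e1, e2]
  -- `b` is constant on each member of `ℱ`
  have hconst : ∀ C ∈ ℱ, ∀ a ∈ C, ∀ a' ∈ C, b a = b a' := by
    intro C hC a ha a' ha'
    rw [hℱ] at hC
    rcases hC with ⟨a₀, h₀, rfl⟩ | ⟨a₀, h₀, rfl⟩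
    · rw [hconstG a₀ h₀ a ha, hconstG a₀ h₀ a' ha']
    · rw [hconstD a₀ h₀ a ha, hconstD a₀ h₀ a' ha']
  -- `ℱ` covers `A`
  have hcover : ∀ a : A, ∃ C ∈ ℱ, a ∈ C := by
    intro a
    by_cases h : a ∈ G
    · exact ⟨connectedComponentIn G a, by rw [hℱ]; exact Or.inl ⟨a, h, rfl⟩,
        mem_connectedComponentIn h⟩
    · exact ⟨closure (connectedComponentIn Gᶜ a), by rw [hℱ]; exact Or.inr ⟨a, h, rfl⟩,
        subset_closure (mem_connectedComponentIn h)⟩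
  -- each member of `ℱ` is closed
  have hGclosed : IsClosed G := by
    have hGeq : G = γ ⁻¹' {z | x ≤ z 0} := by
      ext a
      rw [hGm]
      constructor
      · rintro ⟨_, h⟩; exact le_of_eq h.symm
      · intro h; exact ⟨(hrange a).1, le_antisymm (hrange a).2 h⟩
    rw [hGeq]
    exact (isClosed_le continuous_const (continuous_apply 0)).preimage hγ
  have hCclosed : ∀ C ∈ ℱ, IsClosed C := by
    intro C hC
    rw [hℱ] at hC
    rcases hC with ⟨a₀, h₀, rfl⟩ | ⟨a₀, h₀, rfl⟩
    · rw [connectedComponentIn_eq_image h₀]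
      exact hGclosed.isClosedEmbedding_subtypeVal.isClosedMap _ isClosed_connectedComponent
    · exact isClosed_closure
  -- a set saturated by members of `ℱ` is closed
  have hclosed_of : ∀ s : Set A, (∀ a ∈ s, ∃ C ∈ ℱ, a ∈ C ∧ C ⊆ s) → IsClosed s := by
    intro s hs
    have hseq : s = ⋃ C : {C : ℱ // (C : Set A) ⊆ s}, ((C : ℱ) : Set A) := by
      apply Set.Subset.antisymm
      · intro a ha
        obtain ⟨C, hC, haC, hCs⟩ := hs a ha
        exact Set.mem_iUnion.2 ⟨⟨⟨C, hC⟩, hCs⟩, haC⟩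
      · intro a ha
        obtain ⟨C, haC⟩ := Set.mem_iUnion.1 ha
        exact C.2 haC
    rw [hseq]
    exact (hLF.comp_injective Subtype.val_injective).isClosed_iUnion
      fun C => hCclosed _ (C : ℱ).2
  obtain ⟨a₀⟩ := (inferInstance : Nonempty A)
  -- the level set of `b` through `a₀` is all of `A`
  have hba : ∀ a, b a = b a₀ := by
    have h1 : IsClosed (b ⁻¹' {b a₀}) := by
      apply hclosed_of
      intro a ha
      obtain ⟨C, hC, haC⟩ := hcover a
      refine ⟨C, hC, haC, fun a' ha' => ?_⟩
      have := hconst C hC a' ha' a haC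
      simp only [Set.mem_preimage, Set.mem_singleton_iff] at ha ⊢
      rw [this, ha]
    have h2 : IsClosed (b ⁻¹' {b a₀})ᶜ := by
      apply hclosed_of
      intro a ha
      obtain ⟨C, hC, haC⟩ := hcover a
      refine ⟨C, hC, haC, fun a' ha' => ?_⟩
      simp only [Set.mem_compl_iff, Set.mem_preimage, Set.mem_singleton_iff] at ha ⊢
      rw [hconst C hC a' ha' a haC]
      exact ha
    have hclopen : IsClopen (b ⁻¹' {b a₀}) := ⟨h1, isClosed_compl_iff.1 h2⟩
    have := (isClopen_iff.1 hclopen).resolve_left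
      (Set.Nonempty.ne_empty ⟨a₀, rfl⟩)
    intro a
    exact (Set.eq_univ_iff_forall.1 this a : _)
  refine ⟨b a₀, ⟨⟨pt a₀, hptmem a₀, rfl⟩, ?_⟩, ?_⟩
  · rintro _ ⟨a, rfl⟩
    rw [← hba a]
    exact hclos a
  · rintro B' ⟨⟨z, hzL, rfl⟩, hB'⟩
    have hγa₀cl : γ a₀ ∈ closure (connectedComponentIn L z) := hB' ⟨a₀, rfl⟩
    rcases hdich a₀ with h | h
    · have hins : IsPreconnected (insert (γ a₀) (connectedComponentIn L z)) :=
        isPreconnected_connectedComponentIn.subset_closure (Set.subset_insert _ _)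
          (Set.insert_subset_iff.2 ⟨hγa₀cl, subset_closure⟩)
      have hsub : insert (γ a₀) (connectedComponentIn L z) ⊆ connectedComponentIn L z :=
        hins.subset_connectedComponentIn
          (Set.mem_insert_iff.2 (Or.inr (mem_connectedComponentIn hzL)))
          (Set.insert_subset_iff.2 ⟨h, connectedComponentIn_subset _ _⟩)
      have e : connectedComponentIn L (γ a₀) = connectedComponentIn L z :=
        (connectedComponentIn_eq (hsub (Set.mem_insert _ _))).symm
      rw [← e, ← hbL a₀ h]
    · have hne : (U a₀ ∩ connectedComponentIn L z).Nonempty := by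
        rw [mem_closure_iff] at hγa₀cl
        exact hγa₀cl _ (hU a₀ h).1 (hU a₀ h).2.1
      obtain ⟨w, hwU, hwB⟩ := hne
      have hwL : w ∈ L := connectedComponentIn_subset _ _ hwB
      have e1 : connectedComponentIn L w = b a₀ :=
        (connectedComponentIn_eq (hUb a₀ h ⟨hwU, hwL⟩)).symm
      have e2 : connectedComponentIn L w = connectedComponentIn L z :=
        (connectedComponentIn_eq hwB).symm
      rw [← e2, e1]
end

section
/- Let Z ⊆ ℝⁿ and x ∈ ℝ. Assume that every point y of Z_x has an open connected neighborhood U in ℝⁿ such that U ∩ Z_{<x} is nonempty and connected and y belongs to the closure of U ∩ Z_{<x}. Let C be a connected component of Z_{≤x}, and assume the family of subsets of C consisting of the connected components of C ∩ Z_x together with the closures in C of the connected components of C ∖ Z_x is locally finite in C. If C_{<x} is nonempty, then C_{<x} is a connected component of Z_{<x}; in particular C_{<x} is connected. -/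
/-!
Let `S = C_{<x}` and split it by two open sets `u`, `v`. Every point `p` of `C` is approached
by `S` through a single side: if `p ∈ S` this is the side containing `p`, and if `p ∈ Z_x` the
neighbourhood `U` of `p` is such that `U ∩ Z_{<x}` is preconnected and, being joined to `p`,
lies in `C`, hence in `S` and on one side. So the closures of `S ∩ u` and `S ∩ v` cover `C` and
are disjoint on it, and the connectedness of `C` forces `S` to lie on one side.
-/

open Set

variable {X : Type*} [TopologicalSpace X]

theorem mem_closure_inter_and_notMem_closure_inter {S u v W : Set X} {p : X}
    (huv : S ∩ (u ∩ v) = ∅) (hW : IsOpen W) (hpW : p ∈ W) (hp : p ∈ closure (W ∩ S))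
    (hWu : W ∩ S ⊆ u) : p ∈ closure (S ∩ u) ∧ p ∉ closure (S ∩ v) := by
  refine ⟨closure_mono (subset_inter inter_subset_right hWu) hp, fun hpv => ?_⟩
  obtain ⟨q, hqW, hqS, hqv⟩ := mem_closure_iff.1 hpv W hW hpW
  exact huv.subset ⟨hqS, hWu ⟨hqW, hqS⟩, hqv⟩

theorem IsPreconnected.of_subset_of_forall_diff {C S : Set X} (hC : IsPreconnected C)
    (hSC : S ⊆ C)
    (hloc : ∀ p ∈ C \ S, ∃ U, IsOpen U ∧ p ∈ U ∧ IsPreconnected (U ∩ S) ∧ p ∈ closure (U ∩ S)) :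
    IsPreconnected S := by
  rw [isPreconnected_iff_subset_of_disjoint]
  intro u v hu hv hSuv huv
  have hvu : S ∩ (v ∩ u) = ∅ := by rwa [inter_comm v]
  have key : ∀ p ∈ C, (p ∈ closure (S ∩ u) ∧ p ∉ closure (S ∩ v)) ∨
      (p ∈ closure (S ∩ v) ∧ p ∉ closure (S ∩ u)) := by
    intro p hp
    by_cases hpS : p ∈ S
    · rcases hSuv hpS with hpu | hpv
      · exact .inl <| mem_closure_inter_and_notMem_closure_inter huv hu hpu
          (subset_closure ⟨hpu, hpS⟩) inter_subset_left
      · exact .inr <| mem_closure_inter_and_notMem_closure_inter hvu hv hpv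
          (subset_closure ⟨hpv, hpS⟩) inter_subset_left
    · obtain ⟨U, hU, hpU, hpre, hcl⟩ := hloc p ⟨hp, hpS⟩
      have hUuv : U ∩ S ∩ (u ∩ v) = ∅ :=
        subset_empty_iff.1 (huv ▸ inter_subset_inter_left _ inter_subset_right)
      rcases isPreconnected_iff_subset_of_disjoint.1 hpre u v hu hv
          (inter_subset_right.trans hSuv) hUuv with hUu | hUv
      · exact .inl (mem_closure_inter_and_notMem_closure_inter huv hU hpU hcl hUu)
      · exact .inr (mem_closure_inter_and_notMem_closure_inter hvu hU hpU hcl hUv)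
  have hcover : C ⊆ closure (S ∩ u) ∪ closure (S ∩ v) := fun p hp =>
    (key p hp).imp And.left And.left
  have hdisj : C ∩ (closure (S ∩ u) ∩ closure (S ∩ v)) = ∅ :=
    eq_empty_iff_forall_notMem.2 fun p ⟨hp, hpu, hpv⟩ => by
      rcases key p hp with h | h
      exacts [h.2 hpv, h.2 hpu]
  rcases isPreconnected_iff_subset_of_disjoint_closed.1 hC _ _ isClosed_closure isClosed_closure
      hcover hdisj with hCu | hCv
  · refine .inl fun p hpS => (hSuv hpS).resolve_right fun hpv => ?_
    rcases key p (hSC hpS) with h | h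
    exacts [h.2 (subset_closure ⟨hpS, hpv⟩), h.2 (hCu (hSC hpS))]
  · refine .inr fun p hpS => (hSuv hpS).resolve_left fun hpu => ?_
    rcases key p (hSC hpS) with h | h
    exacts [h.2 (hCv (hSC hpS)), h.2 (subset_closure ⟨hpS, hpu⟩)]

theorem isPreconnected_connectedComponentIn_inter {A B : Set X} (hAB : A ⊆ B)
    (hloc : ∀ p ∈ B \ A, ∃ U, IsOpen U ∧ p ∈ U ∧ IsPreconnected (U ∩ A) ∧ p ∈ closure (U ∩ A))
    (z : X) : IsPreconnected (connectedComponentIn B z ∩ A) := by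
  refine isPreconnected_connectedComponentIn.of_subset_of_forall_diff inter_subset_left ?_
  rintro p ⟨hpC, hpCA⟩
  have hpA : p ∉ A := fun hpA => hpCA ⟨hpC, hpA⟩
  obtain ⟨U, hU, hpU, hpre, hcl⟩ := hloc p ⟨connectedComponentIn_subset _ _ hpC, hpA⟩
  have hUAC : U ∩ A ⊆ connectedComponentIn B z := by
    have hins : IsPreconnected (insert p (U ∩ A)) :=
      hpre.subset_closure (subset_insert _ _) (insert_subset hcl subset_closure)
    rw [connectedComponentIn_eq hpC]
    exact (subset_insert _ _).trans <| hins.subset_connectedComponentIn (mem_insert p _)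
      (insert_subset (connectedComponentIn_subset _ _ hpC) (inter_subset_right.trans hAB))
  have hUS : U ∩ (connectedComponentIn B z ∩ A) = U ∩ A := by
    rw [inter_left_comm, inter_eq_right.2 hUAC]
  exact ⟨U, hU, hpU, hUS ▸ hpre, hUS ▸ hcl⟩

theorem connectedComponentIn_eq_inter_of_isPreconnected {A B : Set X} (hAB : A ⊆ B) {z w : X}
    (hw : w ∈ connectedComponentIn B z ∩ A) (h : IsPreconnected (connectedComponentIn B z ∩ A)) :
    connectedComponentIn A w = connectedComponentIn B z ∩ A := by
  refine (subset_inter ?_ (connectedComponentIn_subset _ _)).antisymm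
    (h.subset_connectedComponentIn hw inter_subset_right)
  rw [connectedComponentIn_eq hw.1]
  exact connectedComponentIn_mono w hAB

theorem component_below_of_component_general
    {n : ℕ} [NeZero n] (Z : Set (Fin n → ℝ)) (x : ℝ)
    (hloc : ∀ y ∈ {z ∈ Z | z 0 = x},
      ∃ U : Set (Fin n → ℝ), IsOpen U ∧ IsConnected U ∧ y ∈ U ∧
        (U ∩ {z ∈ Z | z 0 < x}).Nonempty ∧ IsConnected (U ∩ {z ∈ Z | z 0 < x}) ∧
        y ∈ closure (U ∩ {z ∈ Z | z 0 < x}))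
    (C : Set (Fin n → ℝ))
    (hC : ∃ z ∈ {z ∈ Z | z 0 ≤ x}, C = connectedComponentIn {z ∈ Z | z 0 ≤ x} z)
    (hne : (C ∩ {z | z 0 < x}).Nonempty) :
    (∃ z ∈ {z ∈ Z | z 0 < x},
      C ∩ {z | z 0 < x} = connectedComponentIn {z ∈ Z | z 0 < x} z) ∧
    IsConnected (C ∩ {z | z 0 < x}) := by
  obtain ⟨z₀, -, rfl⟩ := hC
  set A := {z ∈ Z | z 0 < x}
  set B := {z ∈ Z | z 0 ≤ x}
  have hAB : A ⊆ B := fun z hz => ⟨hz.1, hz.2.le⟩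
  have hCA : connectedComponentIn B z₀ ∩ {z | z 0 < x} = connectedComponentIn B z₀ ∩ A := by
    ext p
    exact ⟨fun h => ⟨h.1, (connectedComponentIn_subset _ _ h.1).1, h.2⟩, fun h => ⟨h.1, h.2.2⟩⟩
  have hpre : IsPreconnected (connectedComponentIn B z₀ ∩ A) := by
    refine isPreconnected_connectedComponentIn_inter hAB (fun p ⟨⟨hpZ, hple⟩, hpA⟩ => ?_) z₀
    obtain ⟨U, hU, -, hpU, -, hconn, hcl⟩ :=
      hloc p ⟨hpZ, hple.eq_of_not_lt fun hlt => hpA ⟨hpZ, hlt⟩⟩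
    exact ⟨U, hU, hpU, hconn.isPreconnected, hcl⟩
  obtain ⟨w, hw⟩ := hne
  rw [hCA] at hw ⊢
  exact ⟨⟨w, hw.2, (connectedComponentIn_eq_inter_of_isPreconnected hAB hw hpre).symm⟩,
    ⟨w, hw⟩, hpre⟩

/-- Let `Z ⊆ ℝⁿ` and `x ∈ ℝ`.  Assume every point of `Z_x` has an open
connected neighborhood `U` with `U ∩ Z_{<x}` nonempty and connected, and belongs to the
closure of `U ∩ Z_{<x}`.  Let `C` be a connected component of `Z_{≤x}`, and assume the
family of subsets of `C` formed by the connected components of `C ∩ Z_x` together with the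
closures in `C` of the connected components of `C \ Z_x` is locally finite in `C` (local
finiteness expressed with `nhdsWithin`, closures in `C` as ambient closure intersected
with `C`).  If `C_{<x}` is nonempty, then `C_{<x}` is a connected component of `Z_{<x}`;
in particular it is connected. -/
theorem component_below_of_component
    {n : ℕ} [NeZero n] (Z : Set (Fin n → ℝ)) (x : ℝ)
    (hloc : ∀ y ∈ {z ∈ Z | z 0 = x},
      ∃ U : Set (Fin n → ℝ), IsOpen U ∧ IsConnected U ∧ y ∈ U ∧
        (U ∩ {z ∈ Z | z 0 < x}).Nonempty ∧ IsConnected (U ∩ {z ∈ Z | z 0 < x}) ∧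
        y ∈ closure (U ∩ {z ∈ Z | z 0 < x}))
    (C : Set (Fin n → ℝ))
    (hC : ∃ z ∈ {z ∈ Z | z 0 ≤ x}, C = connectedComponentIn {z ∈ Z | z 0 ≤ x} z)
    (ℱ : Set (Set (Fin n → ℝ)))
    (hℱ : ℱ = {D | (∃ a ∈ C ∩ {z | z 0 = x},
                      D = connectedComponentIn (C ∩ {z | z 0 = x}) a) ∨
                   (∃ a ∈ C \ {z | z 0 = x},
                      D = closure (connectedComponentIn (C \ {z | z 0 = x}) a) ∩ C)})
    (hLF : ∀ c ∈ C, ∃ t ∈ nhdsWithin c C, {D ∈ ℱ | (D ∩ t).Nonempty}.Finite)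
    (hne : (C ∩ {z | z 0 < x}).Nonempty) :
    (∃ z ∈ {z ∈ Z | z 0 < x},
      C ∩ {z | z 0 < x} = connectedComponentIn {z ∈ Z | z 0 < x} z) ∧
    IsConnected (C ∩ {z | z 0 < x}) :=
  component_below_of_component_general Z x hloc C hC hne
end

section
/- Let n, i, j, ℓ be integers with 0 ≤ j ≤ i, j ≤ n − 1, and 0 ≤ ℓ ≤ i − 1. Set r = n − 1 − j, d = n − 1 − (i − j)·r, and s = d − ℓ, and assume d − r ≤ ℓ ≤ d. Then n − 1 − ( (i − j)·( r·(s + 1) − s·(s − 1)/2 ) − (r − s)·s ) ≤ ℓ. -/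
/-! With `q = i - j`, `n - 1 = ℓ + s + q r`, so the claim is `s (r - s + 1) ≤ q (r s - s(s-1)/2)`.
The hypotheses force `0 ≤ s ≤ r`, and `q ≥ 1` since `d - r ≤ ℓ ≤ i - 1` reads `1 ≤ q (r + 1)`;
moreover `r s - s(s-1)/2 = s (r - s + 1) + s(s-1)/2`
with both summands nonnegative. -/

namespace Int

lemma mul_sub_one_ediv_two_nonneg (s : ℤ) : 0 ≤ s * (s - 1) / 2 := by
  have : 0 ≤ s * (s - 1) := by
    rcases le_or_gt 1 s with h | h <;> nlinarith
  omega

lemma mul_sub_ediv_two_eq (r s : ℤ) :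
    r * s - s * (s - 1) / 2 = s * (r - s + 1) + s * (s - 1) / 2 := by
  have := two_mul_ediv_two_of_even (even_mul_pred_self s)
  linarith

lemma mul_sub_add_one_le_mul_sub_ediv_two {q r s : ℤ} (hq : 1 ≤ q) (hs : 0 ≤ s) (hsr : s ≤ r) :
    s * (r - s + 1) ≤ q * (r * s - s * (s - 1) / 2) := by
  rw [mul_sub_ediv_two_eq]
  have hX : 0 ≤ s * (r - s + 1) := mul_nonneg hs (by omega)
  have ht := mul_sub_one_ediv_two_nonneg s
  calc s * (r - s + 1) ≤ s * (r - s + 1) + s * (s - 1) / 2 := le_add_of_nonneg_right ht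
    _ ≤ q * (s * (r - s + 1) + s * (s - 1) / 2) := le_mul_of_one_le_left (add_nonneg hX ht) hq

end Int

theorem thom_boardman_dim_le_general
    (n i j ℓ : ℤ) (hℓi : ℓ ≤ i - 1)
    (r d s : ℤ) (hr : r = n - 1 - j) (hd : d = n - 1 - (i - j) * r) (hs : s = d - ℓ)
    (hlo : d - r ≤ ℓ) (hhi : ℓ ≤ d) :
    n - 1 - ((i - j) * (r * (s + 1) - s * (s - 1) / 2) - (r - s) * s) ≤ ℓ := by
  have hs0 : 0 ≤ s := by omega
  have hsr : s ≤ r := by omega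
  have hq : 1 ≤ i - j := by
    have : 1 ≤ (i - j) * (r + 1) := by linarith
    nlinarith
  have key := Int.mul_sub_add_one_le_mul_sub_ediv_two hq hs0 hsr
  have hn : n - 1 = ℓ + s + (i - j) * r := by linarith
  linarith

/-- Dimension bound for Thom–Boardman strata: for integers
`n, i, j, ℓ` with `0 ≤ j ≤ i`, `j ≤ n - 1`, `0 ≤ ℓ ≤ i - 1`, setting `r = n - 1 - j`,
`d = n - 1 - (i - j) * r` and `s = d - ℓ`, and assuming `d - r ≤ ℓ ≤ d`, one has
`n - 1 - ((i - j) * (r * (s + 1) - s * (s - 1) / 2) - (r - s) * s) ≤ ℓ`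
(integer division; `s * (s - 1)` is always even). -/
theorem thom_boardman_dim_le
    (n i j ℓ : ℤ) (hj0 : 0 ≤ j) (hji : j ≤ i) (hjn : j ≤ n - 1)
    (hℓ0 : 0 ≤ ℓ) (hℓi : ℓ ≤ i - 1)
    (r d s : ℤ) (hr : r = n - 1 - j) (hd : d = n - 1 - (i - j) * r) (hs : s = d - ℓ)
    (hlo : d - r ≤ ℓ) (hhi : ℓ ≤ d) :
    n - 1 - ((i - j) * (r * (s + 1) - s * (s - 1) / 2) - (r - s) * s) ≤ ℓ :=
  thom_boardman_dim_le_general n i j ℓ hℓi r d s hr hd hs hlo hhi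
end
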